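/- Let d be an (⊙,∨)-derivation on the standard MV-algebra I = [0,1] and suppose there exists u ∈ I such that χ^(u)(x) ≤ d(x) for all x ∈ I, where χ^(u)(x) = u if x = 1 and χ^(u)(x) = x otherwise. Then d(x) = x for every x ∈ I with x ≠ 1 (so d = χ^(d(1))). -/
import Mathlib


/-- Łukasiewicz strong conjunction `x ⊙ y = max 0 (x + y - 1)` on the unit interval. -/
noncomputable def od (x y : unitInterval) : unitInterval :=
  ⟨max 0 (x.1 + y.1 - 1),
    ⟨le_max_left _ _, max_le zero_le_one (by have := x.2.2; have := y.2.2; linarith)⟩⟩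

/-- Łukasiewicz strong disjunction `x ⊕ y = min 1 (x + y)` on the unit interval. -/
noncomputable def op (x y : unitInterval) : unitInterval :=
  ⟨min 1 (x.1 + y.1),
    ⟨le_min zero_le_one (by have := x.2.1; have := y.2.1; linarith), min_le_left _ _⟩⟩

/-- `d` is an `(⊙,∨)`-derivation on the standard MV-algebra `[0,1]`:
`d (x ⊙ y) = (d x ⊙ y) ∨ (x ⊙ d y)` for all `x, y`. -/
def IsOdotDer (d : unitInterval → unitInterval) : Prop :=
  ∀ x y : unitInterval, d (od x y) = max (od (d x) y) (od x (d y))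

lemma od_zero_right (a : unitInterval) : od a 0 = 0 := by
  apply Subtype.ext
  simp only [od, Set.Icc.coe_zero]
  have := a.2.2
  simp only [max_eq_left_iff]
  linarith

/-- if d is an (⊙,∨)-derivation and χ⁽ᵘ⁾ ⪯ d pointwise for some u,
then d fixes every x ≠ 1; so d = χ^(d 1). -/
theorem stmt14 (d : unitInterval → unitInterval) (hd : IsOdotDer d)
    (h : ∃ u : unitInterval, ∀ x : unitInterval, (if x = 1 then u else x) ≤ d x) :
    (∀ x : unitInterval, x ≠ 1 → d x = x) ∧
      d = fun x => if x = 1 then d 1 else x := by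
  obtain ⟨u, hu⟩ := h
  have od_zero_left : ∀ a : unitInterval, od 0 a = 0 := by
    intro a
    apply Subtype.ext
    simp only [od, Set.Icc.coe_zero, max_eq_left_iff]
    linarith [a.2.2]
  have hd0 : d 0 = 0 := by
    have := hd 0 0
    rw [od_zero_right 0, od_zero_right (d 0), od_zero_left (d 0)] at this
    simpa using this
  have key : ∀ x : unitInterval, x ≠ 1 → d x = x := by
    intro x hx
    set y : unitInterval := ⟨1 - x.1, by constructor <;> [linarith [x.2.2]; linarith [x.2.1]]⟩
      with hy
    have hxy : od x y = 0 := by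
      apply Subtype.ext
      simp [od, hy]
    have heq := hd x y
    rw [hxy, hd0] at heq
    have h1 : od (d x) y ≤ (0 : unitInterval) := by
      rw [heq]; exact le_max_left _ _
    have h2 : (d x).1 ≤ x.1 := by
      have := h1
      simp only [od, hy, ← Subtype.coe_le_coe, Set.Icc.coe_zero] at this
      have h3 : (d x).1 + (1 - x.1) - 1 ≤ 0 := le_trans (le_max_right _ _) this
      linarith
    have h4 : x ≤ d x := by
      have := hu x
      simpa [hx] using this
    exact le_antisymm (Subtype.coe_le_coe.mp h2) h4
  refine ⟨key, ?_⟩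
  funext x
  by_cases hx : x = 1
  · simp [hx]
  · simp [hx, key x hx]
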